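/- arXiv:1705.06392 — 2 statements merged into one kernel-verified Lean document; each statement's English description precedes it below -/
import Mathlib

section
/- For every integer n ≥ 1 and every integer k with 0 ≤ k ≤ n−1, one has √(n/2) ≤ (1/√n) ∑_{l=0}^{n−1} | cos(2πkl/n) + sin(2πkl/n) | ≤ √n. -/
open scoped BigOperators

lemma sin_sum_zero_aux (n k : ℕ) (hn : 1 ≤ n) :
    ∑ l ∈ Finset.range n, Real.sin (4 * Real.pi * k * l / n) = 0 := by
  have hn0 : (n : ℝ) ≠ 0 := Nat.cast_ne_zero.mpr (by omega)
  set z : ℂ := Complex.exp ((4 * Real.pi * k / n : ℝ) * Complex.I) with hz_def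
  have hz : ∀ l : ℕ, (z ^ l).im = Real.sin (4 * Real.pi * k * l / n) := by
    intro l
    rw [hz_def, ← Complex.exp_nat_mul]
    have h : (l : ℂ) * (((4 * Real.pi * k / n : ℝ) : ℂ) * Complex.I)
        = ((4 * Real.pi * k * l / n : ℝ) : ℂ) * Complex.I := by
      push_cast; ring
    rw [h, Complex.exp_ofReal_mul_I_im]
  have hsum : ∑ l ∈ Finset.range n, Real.sin (4 * Real.pi * k * l / n)
      = (∑ l ∈ Finset.range n, z ^ l).im := by
    rw [Complex.im_sum]
    exact Finset.sum_congr rfl fun l _ => (hz l).symm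
  rw [hsum]
  have hzn : z ^ n = 1 := by
    rw [hz_def, ← Complex.exp_nat_mul]
    have h : (n : ℂ) * (((4 * Real.pi * k / n : ℝ) : ℂ) * Complex.I)
        = ((2 * k : ℤ) : ℂ) * (2 * (Real.pi : ℂ) * Complex.I) := by
      have hnc : (n : ℂ) ≠ 0 := by exact_mod_cast hn0
      push_cast
      field_simp
      ring
    rw [h, Complex.exp_int_mul_two_pi_mul_I]
  by_cases h1 : z = 1
  · simp [h1]
  · rw [geom_sum_eq h1, hzn]
    simp

theorem hartley_l1_norm_bounds (n : ℕ) (hn : 1 ≤ n) (k : ℕ) (hk : k ≤ n - 1) :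
    Real.sqrt (n / 2) ≤
        (1 / Real.sqrt n) * ∑ l ∈ Finset.range n,
          |Real.cos (2 * Real.pi * k * l / n) + Real.sin (2 * Real.pi * k * l / n)| ∧
      (1 / Real.sqrt n) * ∑ l ∈ Finset.range n,
          |Real.cos (2 * Real.pi * k * l / n) + Real.sin (2 * Real.pi * k * l / n)| ≤
        Real.sqrt n := by
  set h : ℕ → ℝ := fun l =>
    Real.cos (2 * Real.pi * k * l / n) + Real.sin (2 * Real.pi * k * l / n) with hh
  have hsq : ∀ l ∈ Finset.range n, (h l) ^ 2 = 1 + Real.sin (4 * Real.pi * k * l / n) := by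
    intro l _
    have h4 : (4 * Real.pi * k * l / n : ℝ) = 2 * (2 * Real.pi * k * l / n) := by ring
    rw [hh, h4, Real.sin_two_mul]
    nlinarith [Real.sin_sq_add_cos_sq (2 * Real.pi * k * l / n)]
  have key : ∑ l ∈ Finset.range n, (h l) ^ 2 = (n : ℝ) := by
    rw [Finset.sum_congr rfl hsq, Finset.sum_add_distrib, sin_sum_zero_aux n k hn]
    simp
  set S : ℝ := ∑ l ∈ Finset.range n, |h l| with hS
  have hS0 : 0 ≤ S := Finset.sum_nonneg fun l _ => abs_nonneg _
  -- upper bound via Cauchy-Schwarz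
  have cs := Finset.sum_mul_sq_le_sq_mul_sq (Finset.range n) (fun l => |h l|) (fun _ => 1)
  simp only [mul_one, one_pow, sq_abs, Finset.sum_const, Finset.card_range, nsmul_eq_mul] at cs
  rw [key, ← hS] at cs
  have hn1 : (1 : ℝ) ≤ (n : ℝ) := by exact_mod_cast hn
  have hSn : S ≤ (n : ℝ) := by nlinarith [hS0, hn1]
  -- lower bound: n = Σ h² ≤ √2 * S
  have habs : ∀ l ∈ Finset.range n, (h l) ^ 2 ≤ Real.sqrt 2 * |h l| := by
    intro l hl
    have h2 : (h l) ^ 2 ≤ 2 := by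
      rw [hsq l hl]
      linarith [Real.sin_le_one (4 * Real.pi * (k : ℝ) * (l : ℝ) / (n : ℝ))]
    have hle : |h l| ≤ Real.sqrt 2 := by
      rw [← Real.sqrt_sq_eq_abs]
      exact Real.sqrt_le_sqrt h2
    calc (h l) ^ 2 = |h l| * |h l| := by rw [← sq_abs]; ring
      _ ≤ Real.sqrt 2 * |h l| := by
          exact mul_le_mul_of_nonneg_right hle (abs_nonneg _)
  have hlow : (n : ℝ) ≤ Real.sqrt 2 * S := by
    calc (n : ℝ) = ∑ l ∈ Finset.range n, (h l) ^ 2 := key.symm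
      _ ≤ ∑ l ∈ Finset.range n, Real.sqrt 2 * |h l| := Finset.sum_le_sum habs
      _ = Real.sqrt 2 * S := by rw [← Finset.mul_sum]
  have hnpos : (0 : ℝ) < n := by exact_mod_cast hn
  have hs : Real.sqrt n > 0 := Real.sqrt_pos.mpr hnpos
  have hs2 : Real.sqrt n * Real.sqrt n = (n : ℝ) := Real.mul_self_sqrt hnpos.le
  have ht : Real.sqrt 2 > 0 := Real.sqrt_pos.mpr (by norm_num)
  have ht2 : Real.sqrt 2 * Real.sqrt 2 = 2 := Real.mul_self_sqrt (by norm_num)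
  constructor
  · have hdiv : Real.sqrt ((n : ℝ) / 2) = Real.sqrt n / Real.sqrt 2 := by
      rw [Real.sqrt_div hnpos.le]
    rw [hdiv, one_div, ← div_eq_inv_mul, div_le_div_iff₀ ht hs]
    nlinarith
  · rw [one_div, ← div_eq_inv_mul, div_le_iff₀ hs]
    nlinarith
end

section
/- Fix a real number p > 1 and set λ_{n,k} = (1/n³)(1 + k/n^p) for integers n ≥ 1 and 0 ≤ k ≤ n−1. Then the family of nonnegative numbers ( λ_{n,k} · ( ∑_{j=0}^∞ |E_{n,k}(j)| )² )_{n ≥ 1, 0 ≤ k ≤ n−1} is NOT summable; indeed ∑_{n=1}^∞ ∑_{k=0}^{n−1} λ_{n,k} ( ∑_j |E_{n,k}(j)| )² = ∑_{n=1}^∞ (1/n²) ∑_{k=0}^{n−1} (1 + k/n^p) ≥ ∑_{n=1}^∞ 1/n = ∞. (Thus the orthogonal eigenvector decomposition T = ∑_{n,k} (√λ_{n,k} E_{n,k}) ⊗ (√λ_{n,k} Ē_{n,k}) of the operator T of the previous statements has divergent sum of squared ℓ¹-norms, so T is not of Type A with respect to the standard basis.) -/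
/-! Every `E_{n,k}` has exactly `n` nonzero entries, each of modulus `1/√n`, so its ℓ¹-norm is `√n`
and the `(n,k)` term equals `λ_{n,k} n ≥ 1/n²`. The `n` terms of the `n`-th block therefore add up
to at least `1/n`, and the harmonic series diverges. -/

open scoped BigOperators ENNReal

/-- The vector `E_{n,k} ∈ ℓ²(ℕ, ℂ)` supported on the `n`-th block
`{n(n-1)/2, …, n(n-1)/2 + n - 1}`, with `E_{n,k}(n(n-1)/2 + l) = (1/√n) e^{-2πikl/n}`. -/
noncomputable def Evec (n k : ℕ) : lp (fun _ : ℕ => ℂ) 2 :=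
  ∑ l ∈ Finset.range n, lp.single 2 (n * (n - 1) / 2 + l)
    (((1 / Real.sqrt n : ℝ) : ℂ) * Complex.exp (-(2 * Real.pi * Complex.I * k * l) / n))

/-- The eigenvalue `λ_{n,k} = (1/n³)(1 + k/nᵖ)`. -/
noncomputable def lam (p : ℝ) (n k : ℕ) : ℝ := (1 / (n : ℝ) ^ 3) * (1 + (k : ℝ) / (n : ℝ) ^ p)

/-- The rank-one operator `v ⊗ v̄ : f ↦ ⟨f, v⟩ v` (with `⟨f, v⟩ = ∑ f conj v`). -/
noncomputable def rankOneC {H : Type*} [NormedAddCommGroup H] [InnerProductSpace ℂ H]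
    (v : H) : H →L[ℂ] H := (innerSL ℂ v).smulRight v

open Finset

theorem tsum_norm_sum_lp_single {α ι E : Type*} [DecidableEq α] [NormedAddCommGroup E]
    {p : ℝ≥0∞} [Fact (1 ≤ p)] (s : Finset ι) {g : ι → α} (hg : Set.InjOn g s) (c : ι → E) :
    ∑' a, ‖(∑ l ∈ s, lp.single p (g l) (c l) : lp (fun _ : α => E) p) a‖ = ∑ l ∈ s, ‖c l‖ := by
  have hcoe : ∀ a, (∑ l ∈ s, lp.single p (g l) (c l) : lp (fun _ : α => E) p) a =
      ∑ l ∈ s, (Pi.single (g l) (c l) : α → E) a := by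
    intro a
    simp only [lp.coeFn_sum, Finset.sum_apply, lp.single_apply]
  rw [tsum_eq_sum (s := s.image g), sum_image hg]
  · refine sum_congr rfl fun m hm => ?_
    rw [hcoe, sum_eq_single_of_mem m hm fun l hl hlm => ?_, Pi.single_eq_same]
    exact Pi.single_eq_of_ne (hg.ne hm hl hlm.symm) _
  · intro a ha
    rw [hcoe, sum_eq_zero, norm_zero]
    intro l hl
    exact Pi.single_eq_of_ne (fun h => ha (mem_image.mpr ⟨l, hl, h.symm⟩)) _

theorem tsum_norm_Evec (n k : ℕ) : ∑' j, ‖Evec n k j‖ = Real.sqrt n := by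
  rw [Evec, tsum_norm_sum_lp_single _ (add_right_injective _).injOn]
  have hcoeff : ∀ l : ℕ, ‖((1 / Real.sqrt n : ℝ) : ℂ) *
      Complex.exp (-(2 * Real.pi * Complex.I * k * l) / n)‖ = 1 / Real.sqrt n := by
    intro l
    simp [Complex.norm_exp, Complex.div_re]
  simp only [hcoeff, sum_const, card_range, nsmul_eq_mul, mul_one_div, Real.div_sqrt]

theorem lam_nonneg (p : ℝ) (n k : ℕ) : 0 ≤ lam p n k := by
  unfold lam; positivity

theorem one_div_le_sum_lam_mul (p : ℝ) (n : ℕ) : 1 / (n : ℝ) ≤ ∑ k ∈ range n, lam p n k * n := by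
  rcases eq_or_ne n 0 with rfl | hn
  · simp
  calc 1 / (n : ℝ) = ∑ _k ∈ range n, 1 / (n : ℝ) ^ 3 * 1 * n := by
        rw [sum_const, card_range, nsmul_eq_mul]
        field_simp
    _ ≤ ∑ k ∈ range n, lam p n k * n := by
        unfold lam
        gcongr
        exact le_add_of_nonneg_right (by positivity)

theorem ENNReal.tsum_ofReal_eq_top_of_not_summable {α : Type*} {f : α → ℝ} (hf : 0 ≤ f)
    (h : ¬Summable f) : ∑' i, ENNReal.ofReal (f i) = ⊤ := by
  by_contra hne
  exact h <| (ENNReal.summable_toReal hne).congr fun i => ENNReal.toReal_ofReal (hf i)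

theorem T_not_type_A_general (p : ℝ) :
    ¬ Summable (fun i : Σ n : ℕ, Fin (n + 1) =>
        lam p (i.1 + 1) (i.2 : ℕ) * (∑' j : ℕ, ‖Evec (i.1 + 1) (i.2 : ℕ) j‖) ^ 2) ∧
    ∑' i : Σ n : ℕ, Fin (n + 1), ENNReal.ofReal
        (lam p (i.1 + 1) (i.2 : ℕ) * (∑' j : ℕ, ‖Evec (i.1 + 1) (i.2 : ℕ) j‖) ^ 2) = ⊤ := by
  simp only [tsum_norm_Evec, Real.sq_sqrt (Nat.cast_nonneg _)]
  have hnonneg : 0 ≤ fun i : Σ n : ℕ, Fin (n + 1) => lam p (i.1 + 1) i.2 * ((i.1 + 1 : ℕ) : ℝ) :=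
    fun i => mul_nonneg (lam_nonneg ..) (Nat.cast_nonneg _)
  have hdiv :
      ¬ Summable fun i : Σ n : ℕ, Fin (n + 1) => lam p (i.1 + 1) i.2 * ((i.1 + 1 : ℕ) : ℝ) := by
    intro hs
    refine Real.not_summable_one_div_natCast ((summable_nat_add_iff 1).mp ?_)
    refine hs.sigma.of_nonneg_of_le (fun n => by positivity) fun n => ?_
    simpa only [tsum_fintype,
      Fin.sum_univ_eq_sum_range (fun k => lam p (n + 1) k * ((n + 1 : ℕ) : ℝ))] using one_div_le_sum_lam_mul p (n + 1)
  exact ⟨hdiv, ENNReal.tsum_ofReal_eq_top_of_not_summable hnonneg hdiv⟩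

theorem T_not_type_A (p : ℝ) (hp : 1 < p) :
    ¬ Summable (fun i : Σ n : ℕ, Fin (n + 1) =>
        lam p (i.1 + 1) (i.2 : ℕ) * (∑' j : ℕ, ‖Evec (i.1 + 1) (i.2 : ℕ) j‖) ^ 2) ∧
    ∑' i : Σ n : ℕ, Fin (n + 1), ENNReal.ofReal
        (lam p (i.1 + 1) (i.2 : ℕ) * (∑' j : ℕ, ‖Evec (i.1 + 1) (i.2 : ℕ) j‖) ^ 2) = ⊤ :=
  T_not_type_A_general p
end
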